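/- Let φ ∈ ℂ^n be a unit vector, let R_φ = 2φφᴴ − I_n be the reflection operator about φ, let H = (1/√2)·[[1,1],[1,−1]] be the Hadamard matrix, and let e₀, e₁ be the standard basis vectors of ℂ². Define the operator C_φ = (I_n ⊗ H) · (R_φ ⊗ |1⟩⟨1| + I_n ⊗ |0⟩⟨0|) · (I_n ⊗ H) on ℂ^n ⊗ ℂ². Then for every vector ψ ∈ ℂ^n, C_φ (ψ ⊗ e₀) = ⟨φ,ψ⟩ · (φ ⊗ e₀) + (ψ − ⟨φ,ψ⟩·φ) ⊗ e₁. -/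

import Mathlib

open Matrix
open scoped Kronecker

/-- The outer product `φφᴴ` of a vector with itself: entries `φ i * conj (φ j)`. -/
def outer {n : ℕ} (φ : EuclideanSpace ℂ (Fin n)) : Matrix (Fin n) (Fin n) ℂ :=
  Matrix.of fun i j => φ i * star (φ j)

/-- The reflectOp operator `R_φ = 2φφᴴ − I`. -/
def reflectOp {n : ℕ} (φ : EuclideanSpace ℂ (Fin n)) : Matrix (Fin n) (Fin n) ℂ :=
  (2 : ℂ) • outer φ - 1

/-- The Hadamard matrix `(1/√2)·[[1,1],[1,−1]]`. -/
noncomputable def Had : Matrix (Fin 2) (Fin 2) ℂ :=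
  ((1 / Real.sqrt 2 : ℝ) : ℂ) • !![1, 1; 1, -1]

/-- `|0⟩⟨0|`. -/
def ket0bra0 : Matrix (Fin 2) (Fin 2) ℂ := !![1, 0; 0, 0]

/-- `|1⟩⟨1|`. -/
def ket1bra1 : Matrix (Fin 2) (Fin 2) ℂ := !![0, 0; 0, 1]

/-- The standard basis vector `e₀` of `ℂ²`. -/
def e0 : Fin 2 → ℂ := ![1, 0]

/-- The standard basis vector `e₁` of `ℂ²`. -/
def e1 : Fin 2 → ℂ := ![0, 1]

/-- The checking operator `C_φ = (I ⊗ H) · (R_φ ⊗ |1⟩⟨1| + I ⊗ |0⟩⟨0|) · (I ⊗ H)`. -/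
noncomputable def checkOp {n : ℕ} (φ : EuclideanSpace ℂ (Fin n)) :
    Matrix (Fin n × Fin 2) (Fin n × Fin 2) ℂ :=
  ((1 : Matrix (Fin n) (Fin n) ℂ) ⊗ₖ Had) *
    (reflectOp φ ⊗ₖ ket1bra1 + (1 : Matrix (Fin n) (Fin n) ℂ) ⊗ₖ ket0bra0) *
    ((1 : Matrix (Fin n) (Fin n) ℂ) ⊗ₖ Had)

/- Conjugating the qubit factor by the Hadamard matrix turns the projections
`|0⟩⟨0|` and `|1⟩⟨1|` into the projections onto `|+⟩` and `|−⟩`, so by the mixed-product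
property `C_φ = R_φ ⊗ |−⟩⟨−| + I ⊗ |+⟩⟨+|`. On `ψ ⊗ e₀` this gives
`((ψ + R_φ ψ)/2) ⊗ e₀ + ((ψ − R_φ ψ)/2) ⊗ e₁`, and `R_φ ψ = 2⟨φ,ψ⟩φ − ψ`. -/

theorem kronecker_mulVec_mul {R l m p q : Type*} [CommSemiring R] [Fintype m] [Fintype q]
    (A : Matrix l m R) (B : Matrix p q R) (x : m → R) (y : q → R) :
    (A ⊗ₖ B) *ᵥ (fun j => x j.1 * y j.2) = fun i => (A *ᵥ x) i.1 * (B *ᵥ y) i.2 := by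
  funext i
  simp only [mulVec, dotProduct, kroneckerMap_apply, Fintype.sum_prod_type, Finset.sum_mul_sum]
  exact Finset.sum_congr rfl fun _ _ => Finset.sum_congr rfl fun _ _ => by ring

theorem outer_mulVec {n : ℕ} (φ ψ : EuclideanSpace ℂ (Fin n)) :
    outer φ *ᵥ ⇑ψ = fun i => inner ℂ φ ψ * φ i := by
  funext i
  simp only [outer, mulVec, dotProduct, of_apply, PiLp.inner_apply, RCLike.inner_apply,
    Finset.sum_mul]
  exact Finset.sum_congr rfl fun _ _ => by simp only [Complex.star_def]; ring

theorem reflectOp_mulVec {n : ℕ} (φ ψ : EuclideanSpace ℂ (Fin n)) :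
    reflectOp φ *ᵥ ⇑ψ = fun i => 2 * inner ℂ φ ψ * φ i - ψ i := by
  funext i
  simp [reflectOp, sub_mulVec, smul_mulVec, outer_mulVec, mul_assoc]

theorem ofReal_sqrt_two_inv_mul_self : ((√2 : ℝ) : ℂ)⁻¹ * ((√2 : ℝ) : ℂ)⁻¹ = 2⁻¹ := by
  rw [← mul_inv, ← Complex.ofReal_mul, Real.mul_self_sqrt zero_le_two]
  norm_num

theorem Had_mul_ket0bra0_mul_Had : Had * ket0bra0 * Had = (1 / 2 : ℂ) • !![1, 1; 1, 1] := by
  ext i j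
  fin_cases i <;> fin_cases j <;>
    simp [Had, ket0bra0, ofReal_sqrt_two_inv_mul_self]

theorem Had_mul_ket1bra1_mul_Had : Had * ket1bra1 * Had = (1 / 2 : ℂ) • !![1, -1; -1, 1] := by
  ext i j
  fin_cases i <;> fin_cases j <;>
    simp [Had, ket1bra1, ofReal_sqrt_two_inv_mul_self]

theorem checkOp_eq {n : ℕ} (φ : EuclideanSpace ℂ (Fin n)) :
    checkOp φ = reflectOp φ ⊗ₖ (Had * ket1bra1 * Had) + 1 ⊗ₖ (Had * ket0bra0 * Had) := by
  simp only [checkOp, mul_add, add_mul, ← mul_kronecker_mul, Matrix.one_mul, Matrix.mul_one]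

theorem checkOp_apply_general {n : ℕ} (φ : EuclideanSpace ℂ (Fin n))
    (ψ : EuclideanSpace ℂ (Fin n)) :
    (checkOp φ).mulVec (fun p => ψ p.1 * e0 p.2) =
      fun p => (inner ℂ φ ψ : ℂ) * (φ p.1 * e0 p.2) +
        (ψ p.1 - (inner ℂ φ ψ : ℂ) * φ p.1) * e1 p.2 := by
  rw [checkOp_eq, add_mulVec, kronecker_mulVec_mul, kronecker_mulVec_mul, reflectOp_mulVec,
    one_mulVec, Had_mul_ket0bra0_mul_Had, Had_mul_ket1bra1_mul_Had]
  funext ⟨i, b⟩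
  fin_cases b <;> simp [e0, e1] <;> ring

theorem checkOp_apply {n : ℕ} (φ : EuclideanSpace ℂ (Fin n)) (hφ : ‖φ‖ = 1)
    (ψ : EuclideanSpace ℂ (Fin n)) :
    (checkOp φ).mulVec (fun p => ψ p.1 * e0 p.2) =
      fun p => (inner ℂ φ ψ : ℂ) * (φ p.1 * e0 p.2) +
        (ψ p.1 - (inner ℂ φ ψ : ℂ) * φ p.1) * e1 p.2 :=
  checkOp_apply_general φ ψ
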